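/- arXiv:1808.05530 — 3 statements merged into one kernel-verified Lean document; each statement's English description precedes it below -/
import Mathlib

section
/- Let d ≥ 1 be an integer, L_b > 0, β > 0, α ≥ 0 real constants, and let b : ℝ^d → ℝ^d be continuous and satisfy ⟨x − x', b(x) − b(x')⟩ ≤ L_b·‖x − x'‖² and ⟨x, b(x)⟩ ≤ α + β·‖x‖² for all x, x' ∈ ℝ^d. Then for every real h with 0 < h < 1/max(L_b, 2β) and every y ∈ ℝ^d, there exists a unique x ∈ ℝ^d such that x − h·b(x) = y. -/
/-!
A continuous map `F` with `c ‖x - z‖² ≤ ⟪x - z, F x - F z⟫` (`c > 0`) on a finite-dimensional real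
inner product space is a bijection; for `F x = x - h • b x` the one-sided Lipschitz bound gives
this with `c = 1 - h L_b > 0`.

Surjectivity goes by induction on the dimension. Fix `e ≠ 0` and `W = (ℝ ∙ e)ᗮ`. On each line
`w + ℝ e` the component `t ↦ ⟪e, F (w + t • e)⟫` grows at least linearly, so by the intermediate
value theorem it takes the value `⟪e, y⟫` at a unique `φ w`, and `φ` is continuous. The map
`w ↦ proj_W (F (w + φ w • e))` is again strongly monotone on the smaller space `W`, so it hits
`proj_W y`, and the corresponding point is mapped to `y` by `F`.
-/

open RealInnerProductSpace Module Filter Function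

theorem strictMono_of_monotone_sub_mul {f : ℝ → ℝ} {c : ℝ} (hc : 0 < c)
    (hf : Monotone fun t => f t - c * t) : StrictMono f := fun s t hst => by
  have := hf hst.le
  nlinarith

theorem surjective_of_monotone_sub_mul {f : ℝ → ℝ} {c : ℝ} (hc : 0 < c) (hcont : Continuous f)
    (hf : Monotone fun t => f t - c * t) : Surjective f := by
  refine hcont.surjective ?_ ?_
  · refine tendsto_atTop_mono' _ ?_
      (tendsto_atTop_add_const_left _ (f 0) (tendsto_id.const_mul_atTop hc))
    filter_upwards [eventually_ge_atTop 0] with t ht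
    have := hf ht
    dsimp only [id] at this ⊢
    linarith
  · refine tendsto_atBot_mono' _ ?_
      (tendsto_atBot_add_const_left _ (f 0) (tendsto_id.const_mul_atBot hc))
    filter_upwards [eventually_le_atBot 0] with t ht
    have := hf ht
    dsimp only [id] at this ⊢
    linarith

theorem continuous_of_strictMono_apply_eq {X : Type*} [TopologicalSpace X] {ψ : X → ℝ → ℝ}
    (hψ : Continuous (uncurry ψ)) (hmono : ∀ x, StrictMono (ψ x)) {a : ℝ} {φ : X → ℝ}
    (hφ : ∀ x, ψ x (φ x) = a) : Continuous φ := by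
  refine continuous_iff_continuousAt.2 fun x => tendsto_order.2 ⟨fun l hl => ?_, fun u hu => ?_⟩
  · have hlt : ψ x l < a := hφ x ▸ hmono x hl
    filter_upwards [(hψ.comp (Continuous.prodMk_left l)).continuousAt.eventually_lt
      continuousAt_const hlt] with x' hx'
    exact (hmono x').lt_iff_lt.1 (hφ x' ▸ hx')
  · have hlt : a < ψ x u := hφ x ▸ hmono x hu
    filter_upwards [continuousAt_const.eventually_lt
      (hψ.comp (Continuous.prodMk_left u)).continuousAt hlt] with x' hx'
    exact (hmono x').lt_iff_lt.1 (hφ x' ▸ hx')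

variable {V : Type*} [NormedAddCommGroup V] [InnerProductSpace ℝ V]

theorem eq_of_orthogonalProjectionOnto_eq_of_inner_eq [CompleteSpace V] {e u v : V}
    (hproj : (ℝ ∙ e)ᗮ.orthogonalProjectionOnto u = (ℝ ∙ e)ᗮ.orthogonalProjectionOnto v)
    (he : ⟪e, u⟫ = ⟪e, v⟫) : u = v := by
  have hK : u - v ∈ ℝ ∙ e := by
    rw [← Submodule.orthogonal_orthogonal (ℝ ∙ e), ← Submodule.orthogonalProjectionOnto_eq_zero_iff,
      map_sub, hproj, sub_self]
  have hKperp : u - v ∈ (ℝ ∙ e)ᗮ := by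
    rw [Submodule.mem_orthogonal_singleton_iff_inner_right, inner_sub_right, he, sub_self]
  have : u - v ∈ (ℝ ∙ e) ⊓ (ℝ ∙ e)ᗮ := ⟨hK, hKperp⟩
  rwa [Submodule.inf_orthogonal_eq_bot, Submodule.mem_bot, sub_eq_zero] at this

def StronglyMonotoneWith (c : ℝ) (F : V → V) : Prop :=
  ∀ x z, c * ‖x - z‖ ^ 2 ≤ ⟪x - z, F x - F z⟫

namespace StronglyMonotoneWith

variable {c : ℝ} {F : V → V}

theorem injective (hF : StronglyMonotoneWith c F) (hc : 0 < c) : Injective F := by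
  intro x z hxz
  have h := hF x z
  rw [hxz, sub_self, inner_zero_right] at h
  have : ‖x - z‖ ^ 2 ≤ 0 := nonpos_of_mul_nonpos_right h hc
  rwa [sq_nonpos_iff, norm_eq_zero, sub_eq_zero] at this

theorem monotone_inner_sub_mul (hF : StronglyMonotoneWith c F) (e v : V) :
    Monotone fun t : ℝ => ⟪e, F (v + t • e)⟫ - c * ‖e‖ ^ 2 * t := by
  intro s t hst
  have h := hF (v + t • e) (v + s • e)
  rw [add_sub_add_left_eq_sub, ← sub_smul, norm_smul, real_inner_smul_left, inner_sub_right,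
    Real.norm_eq_abs, mul_pow, sq_abs] at h
  have : c * ‖e‖ ^ 2 * (t - s) ≤ ⟪e, F (v + t • e)⟫ - ⟪e, F (v + s • e)⟫ := by
    rcases hst.eq_or_lt with rfl | hlt
    · simp
    · nlinarith
  linarith

theorem orthogonalProjectionOnto_comp_add_smul (hF : StronglyMonotoneWith c F) (hc : 0 ≤ c)
    {e : V} {φ : (ℝ ∙ e)ᗮ → ℝ} {a : ℝ} (hφ : ∀ w, ⟪e, F (w + φ w • e)⟫ = a) :
    StronglyMonotoneWith c fun w : (ℝ ∙ e)ᗮ =>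
      (ℝ ∙ e)ᗮ.orthogonalProjectionOnto (F (w + φ w • e)) := by
  intro w w'
  set X : V := w + φ w • e
  set X' : V := w' + φ w' • e
  have he : ⟪((w - w' : (ℝ ∙ e)ᗮ) : V), e⟫ = 0 :=
    Submodule.mem_orthogonal_singleton_iff_inner_left.1 (w - w').2
  have hdiff : X - X' = ((w - w' : (ℝ ∙ e)ᗮ) : V) + (φ w - φ w') • e := by
    simp only [X, X', Submodule.coe_sub, sub_smul]
    abel
  have hnorm : ‖w - w'‖ ^ 2 ≤ ‖X - X'‖ ^ 2 := by
    rw [hdiff, norm_add_sq_real, real_inner_smul_right, he, mul_zero, mul_zero, add_zero]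
    exact le_add_of_nonneg_right (sq_nonneg _)
  have hlevel : ⟪e, F X - F X'⟫ = 0 := by
    rw [inner_sub_right, sub_eq_zero]
    exact (hφ w).trans (hφ w').symm
  have hinner : ⟪w - w', (ℝ ∙ e)ᗮ.orthogonalProjectionOnto (F X) -
      (ℝ ∙ e)ᗮ.orthogonalProjectionOnto (F X')⟫ = ⟪X - X', F X - F X'⟫ := by
    rw [← map_sub, Submodule.inner_orthogonalProjectionOnto_eq_of_mem_left, hdiff, inner_add_left,
      real_inner_smul_left, hlevel, mul_zero, add_zero]
  calc c * ‖w - w'‖ ^ 2 ≤ c * ‖X - X'‖ ^ 2 := mul_le_mul_of_nonneg_left hnorm hc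
    _ ≤ _ := (hF X X').trans_eq hinner.symm

theorem surjective [FiniteDimensional ℝ V] (hF : StronglyMonotoneWith c F)
    (hc : 0 < c) (hcont : Continuous F) : Surjective F := by
  obtain ⟨n, hn⟩ : ∃ n, finrank ℝ V = n := ⟨_, rfl⟩
  induction n generalizing V with
  | zero =>
    have : Subsingleton V := finrank_zero_iff.1 hn
    exact fun y => ⟨y, Subsingleton.elim _ _⟩
  | succ n ih =>
    intro y
    have : Nontrivial V := nontrivial_of_finrank_eq_succ hn
    obtain ⟨e, he⟩ := exists_ne (0 : V)
    have : Fact (finrank ℝ V = n + 1) := ⟨hn⟩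
    set W := (ℝ ∙ e)ᗮ
    set ψ : W → ℝ → ℝ := fun w t => ⟪e, F (w + t • e)⟫
    have hce : 0 < c * ‖e‖ ^ 2 := by positivity
    have hψ : Continuous (uncurry ψ) := by fun_prop
    have hroot : ∀ w, ∃ t, ψ w t = ⟪e, y⟫ := fun w =>
      surjective_of_monotone_sub_mul hce (hψ.comp (Continuous.prodMk_right w))
        (hF.monotone_inner_sub_mul e w) _
    choose φ hφ using hroot
    have hφcont : Continuous φ := continuous_of_strictMono_apply_eq hψ
      (fun w => strictMono_of_monotone_sub_mul hce (hF.monotone_inner_sub_mul e w)) hφ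
    obtain ⟨w, hw⟩ := ih (hF.orthogonalProjectionOnto_comp_add_smul hc.le hφ) (by fun_prop)
      (Submodule.finrank_orthogonal_span_singleton he) (W.orthogonalProjectionOnto y)
    exact ⟨w + φ w • e, eq_of_orthogonalProjectionOnto_eq_of_inner_eq hw (hφ w)⟩

end StronglyMonotoneWith

theorem stronglyMonotoneWith_sub_smul {b : V → V} {L h : ℝ}
    (hosl : ∀ x x', ⟪x - x', b x - b x'⟫ ≤ L * ‖x - x'‖ ^ 2) (hh : 0 ≤ h) :
    StronglyMonotoneWith (1 - h * L) fun x => x - h • b x := by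
  intro x x'
  have := mul_le_mul_of_nonneg_left (hosl x x') hh
  rw [sub_sub_sub_comm, ← smul_sub, inner_sub_right, real_inner_smul_right,
    real_inner_self_eq_norm_sq]
  linarith

theorem stmt_5_general (d : ℕ) (L_b β : ℝ)
    (b : EuclideanSpace ℝ (Fin d) → EuclideanSpace ℝ (Fin d)) (hcont : Continuous b)
    (hosl : ∀ x x' : EuclideanSpace ℝ (Fin d), ⟪x - x', b x - b x'⟫ ≤ L_b * ‖x - x'‖ ^ 2) :
    ∀ h : ℝ, 0 < h → h < 1 / max L_b (2 * β) →
      ∀ y : EuclideanSpace ℝ (Fin d), ∃! x : EuclideanSpace ℝ (Fin d), x - h • b x = y := by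
  intro h hh hsmall y
  have hmax : 0 < max L_b (2 * β) := one_div_pos.1 (hh.trans hsmall)
  have hc : 0 < 1 - h * L_b := by
    have : h * L_b ≤ h * max L_b (2 * β) := mul_le_mul_of_nonneg_left (le_max_left _ _) hh.le
    have : h * max L_b (2 * β) < 1 := (lt_div_iff₀ hmax).1 hsmall
    linarith
  have hF := stronglyMonotoneWith_sub_smul hosl hh.le
  exact (Bijective.existsUnique ⟨hF.injective hc, hF.surjective hc (by fun_prop)⟩ y)

/-- Well-posedness of the implicit Euler step: for a continuous one-sided Lipschitz drift with
monotone growth, and a small enough step size, `x - h • b x = y` has a unique solution. -/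
theorem stmt_5 (d : ℕ) (hd : 1 ≤ d) (L_b β α : ℝ) (hLb : 0 < L_b) (hβ : 0 < β) (hα : 0 ≤ α)
    (b : EuclideanSpace ℝ (Fin d) → EuclideanSpace ℝ (Fin d)) (hcont : Continuous b)
    (hosl : ∀ x x' : EuclideanSpace ℝ (Fin d), ⟪x - x', b x - b x'⟫ ≤ L_b * ‖x - x'‖ ^ 2)
    (hmono : ∀ x : EuclideanSpace ℝ (Fin d), ⟪x, b x⟫ ≤ α + β * ‖x‖ ^ 2) :
    ∀ h : ℝ, 0 < h → h < 1 / max L_b (2 * β) →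
      ∀ y : EuclideanSpace ℝ (Fin d), ∃! x : EuclideanSpace ℝ (Fin d), x - h • b x = y :=
  stmt_5_general d L_b β b hcont hosl
end

section
/- Let d ≥ 1, N ≥ 1 be integers, q > 1 an integer, C₁ ≥ 0, M ≥ 1 an integer and α ∈ (0, 1/2]. Then there exists a constant C, depending only on C₁ and q, such that: for every x ∈ ℝ^d, y ∈ (ℝ^d)^N and a ∈ ℝ^d with ‖a‖ ≤ C₁·(1 + ‖x‖^{q+1} + ((1/N)·Σ_{j=1}^N ‖y_j‖²)^{1/2}), and every u ∈ ℝ^d: ⟨u, a − a/(1 + M^{−α}·‖a‖)⟩ ≤ (1/2)·‖u‖² + C·M^{−2α}·(1 + ‖x‖^{4(1+q)} + ((1/N)·Σ_{j=1}^N ‖y_j‖²)²). -/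
/-!
Write `c = (1 + t‖a‖)⁻¹` with `t = M^{-α}`. The taming error is `(1 - c) • a` and
`1 - c = t‖a‖c ≤ t‖a‖`, so its norm is at most `t‖a‖²`. Cauchy–Schwarz and Young's inequality
then bound `⟪u, a - c • a⟫` by `‖u‖²/2 + t²‖a‖⁴/2`, and the growth bound on `a` controls `‖a‖⁴`
through the power-mean inequality `(p + r + s)⁴ ≤ 27 (p⁴ + r⁴ + s⁴)`.
-/

open RealInnerProductSpace

section Taming

variable {E : Type*} [NormedAddCommGroup E] [InnerProductSpace ℝ E]

theorem norm_sub_tame_le {t : ℝ} (ht : 0 ≤ t) (a : E) :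
    ‖a - (1 + t * ‖a‖)⁻¹ • a‖ ≤ t * ‖a‖ ^ 2 := by
  have hcoeff : 1 - (1 + t * ‖a‖)⁻¹ = t * ‖a‖ / (1 + t * ‖a‖) := by
    field_simp; ring
  have hcoeff_le : t * ‖a‖ / (1 + t * ‖a‖) ≤ t * ‖a‖ :=
    div_le_self (by positivity) (by linarith [mul_nonneg ht (norm_nonneg a)])
  calc ‖a - (1 + t * ‖a‖)⁻¹ • a‖ = ‖(1 - (1 + t * ‖a‖)⁻¹) • a‖ := by rw [sub_smul, one_smul]
    _ = (t * ‖a‖ / (1 + t * ‖a‖)) * ‖a‖ := by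
        rw [norm_smul, hcoeff, Real.norm_of_nonneg (by positivity)]
    _ ≤ t * ‖a‖ * ‖a‖ := by gcongr
    _ = t * ‖a‖ ^ 2 := by ring

theorem real_inner_le_half_norm_sq_add (u v : E) : ⟪u, v⟫ ≤ ‖u‖ ^ 2 / 2 + ‖v‖ ^ 2 / 2 := by
  nlinarith [real_inner_le_norm u v, sq_nonneg (‖u‖ - ‖v‖)]

theorem inner_sub_tame_le {t : ℝ} (ht : 0 ≤ t) (a u : E) :
    ⟪u, a - (1 + t * ‖a‖)⁻¹ • a⟫ ≤ ‖u‖ ^ 2 / 2 + t ^ 2 * ‖a‖ ^ 4 / 2 := by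
  have hnorm := norm_sub_tame_le ht a
  calc ⟪u, a - (1 + t * ‖a‖)⁻¹ • a⟫
      ≤ ‖u‖ ^ 2 / 2 + ‖a - (1 + t * ‖a‖)⁻¹ • a‖ ^ 2 / 2 := real_inner_le_half_norm_sq_add _ _
    _ ≤ ‖u‖ ^ 2 / 2 + (t * ‖a‖ ^ 2) ^ 2 / 2 := by gcongr
    _ = ‖u‖ ^ 2 / 2 + t ^ 2 * ‖a‖ ^ 4 / 2 := by ring

end Taming

theorem add_add_pow_four_le (a b c : ℝ) : (a + b + c) ^ 4 ≤ 27 * (a ^ 4 + b ^ 4 + c ^ 4) := by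
  have hsq (a b c : ℝ) : (a + b + c) ^ 2 ≤ 3 * (a ^ 2 + b ^ 2 + c ^ 2) := by
    nlinarith [sq_nonneg (a - b), sq_nonneg (a - c), sq_nonneg (b - c)]
  calc (a + b + c) ^ 4 = ((a + b + c) ^ 2) ^ 2 := by ring
    _ ≤ (3 * (a ^ 2 + b ^ 2 + c ^ 2)) ^ 2 := by gcongr; exact hsq a b c
    _ = 9 * (a ^ 2 + b ^ 2 + c ^ 2) ^ 2 := by ring
    _ ≤ 9 * (3 * ((a ^ 2) ^ 2 + (b ^ 2) ^ 2 + (c ^ 2) ^ 2)) := by gcongr; exact hsq _ _ _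
    _ = 27 * (a ^ 4 + b ^ 4 + c ^ 4) := by ring

theorem pow_four_le_of_le_mul_one_add_add {r C p s : ℝ} (hr : 0 ≤ r) (h : r ≤ C * (1 + p + s)) :
    r ^ 4 ≤ 27 * C ^ 4 * (1 + p ^ 4 + s ^ 4) := by
  calc r ^ 4 ≤ (C * (1 + p + s)) ^ 4 := by gcongr
    _ = C ^ 4 * (1 + p + s) ^ 4 := by ring
    _ ≤ C ^ 4 * (27 * (1 ^ 4 + p ^ 4 + s ^ 4)) := by gcongr; exact add_add_pow_four_le _ _ _
    _ = 27 * C ^ 4 * (1 + p ^ 4 + s ^ 4) := by ring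

theorem stmt_10_general (C₁ : ℝ) (q : ℕ) :
    ∃ C : ℝ, ∀ (d N M : ℕ), 1 ≤ d → 1 ≤ N → 1 ≤ M → ∀ α : ℝ, 0 < α → α ≤ 1 / 2 →
      ∀ (x : EuclideanSpace ℝ (Fin d)) (y : Fin N → EuclideanSpace ℝ (Fin d))
        (a u : EuclideanSpace ℝ (Fin d)),
        ‖a‖ ≤ C₁ * (1 + ‖x‖ ^ (q + 1) + Real.sqrt ((1 / N) * ∑ j, ‖y j‖ ^ 2)) →
        ⟪u, a - (1 + (M : ℝ) ^ (-α) * ‖a‖)⁻¹ • a⟫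
          ≤ (1 / 2) * ‖u‖ ^ 2
            + C * (M : ℝ) ^ (-(2 * α)) * (1 + ‖x‖ ^ (4 * (1 + q)) + ((1 / N) * ∑ j, ‖y j‖ ^ 2) ^ 2) := by
  refine ⟨27 / 2 * C₁ ^ 4, fun d N M _ _ _ α _ _ x y a u ha => ?_⟩
  set S : ℝ := (1 / N) * ∑ j, ‖y j‖ ^ 2
  have hS : 0 ≤ S := by positivity
  have hM : (0 : ℝ) ≤ M := M.cast_nonneg
  have ht_sq : ((M : ℝ) ^ (-α)) ^ 2 = (M : ℝ) ^ (-(2 * α)) := by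
    rw [← Real.rpow_natCast, ← Real.rpow_mul hM]; ring_nf
  have ha4 : ‖a‖ ^ 4 ≤ 27 * C₁ ^ 4 * (1 + ‖x‖ ^ (4 * (1 + q)) + S ^ 2) := by
    have h := pow_four_le_of_le_mul_one_add_add (norm_nonneg a) ha
    have hsqrt : √S ^ 4 = S ^ 2 := by rw [show 4 = 2 * 2 from rfl, pow_mul, Real.sq_sqrt hS]
    rwa [← pow_mul, show (q + 1) * 4 = 4 * (1 + q) by ring, hsqrt] at h
  calc ⟪u, a - (1 + (M : ℝ) ^ (-α) * ‖a‖)⁻¹ • a⟫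
      ≤ ‖u‖ ^ 2 / 2 + ((M : ℝ) ^ (-α)) ^ 2 * ‖a‖ ^ 4 / 2 :=
        inner_sub_tame_le (Real.rpow_nonneg hM _) a u
    _ ≤ ‖u‖ ^ 2 / 2 + (M : ℝ) ^ (-(2 * α)) * (27 * C₁ ^ 4 * (1 + ‖x‖ ^ (4 * (1 + q)) + S ^ 2)) / 2 := by
        rw [ht_sq]; gcongr
    _ = _ := by ring

/-- The key taming-bias estimate: for a vector `a` satisfying a polynomial growth bound of degree
`q+1`, the inner product of any `u` with the taming error `a - a/(1 + M^{-α}‖a‖)` is controlled by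
`‖u‖²/2` plus a term of order `M^{-2α}`, with a constant depending only on `C₁` and `q`. -/
theorem stmt_10 (C₁ : ℝ) (hC₁ : 0 ≤ C₁) (q : ℕ) (hq : 1 < q) :
    ∃ C : ℝ, ∀ (d N M : ℕ), 1 ≤ d → 1 ≤ N → 1 ≤ M → ∀ α : ℝ, 0 < α → α ≤ 1 / 2 →
      ∀ (x : EuclideanSpace ℝ (Fin d)) (y : Fin N → EuclideanSpace ℝ (Fin d))
        (a u : EuclideanSpace ℝ (Fin d)),
        ‖a‖ ≤ C₁ * (1 + ‖x‖ ^ (q + 1) + Real.sqrt ((1 / N) * ∑ j, ‖y j‖ ^ 2)) →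
        ⟪u, a - (1 + (M : ℝ) ^ (-α) * ‖a‖)⁻¹ • a⟫
          ≤ (1 / 2) * ‖u‖ ^ 2
            + C * (M : ℝ) ^ (-(2 * α)) * (1 + ‖x‖ ^ (4 * (1 + q)) + ((1 / N) * ∑ j, ‖y j‖ ^ 2) ^ 2) :=
  stmt_10_general C₁ q
end

section
/- Assume the implicit Euler particle scheme setup described in the context. For every real p ≥ 2 with E‖X_0^1‖^p < ∞ and every m > 0, there exists a constant C(p,m), depending only on d, l, T, L_b, L, C₀, q, α₀, β₀, h*, p, m and E‖X_0^1‖^p, but not on M, N, i, k or h ∈ (0, h*], such that for all 0 ≤ k ≤ M and 1 ≤ i ≤ N: E[ ‖X̃_k^i‖^p · 1_{{k ≤ λ_m^i}} ] ≤ C(p,m). -/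
open MeasureTheory ProbabilityTheory RealInnerProductSpace
open scoped ENNReal NNReal

/-! On the event `{k ≤ λ_m^i}` the previous iterate satisfies `‖X̃_{k-1}^i‖ ≤ m`, so one step of
the scheme suffices. Pairing the implicit equation `x' - h b = z` with `x'` and using the monotone
growth condition together with `h β₀ ≤ 1/2` gives `‖x'‖² ≤ 2 ‖x'‖ ‖z‖ + 2 h α₀`, hence
`‖X̃_k^i‖ ≤ A + K ‖ΔW_{k-1}^i‖` with `A`, `K` depending only on `m`, `L`, `C₀`, `α₀` and `h*`.
Minkowski's inequality and the scaling `N(0, h) = √h · N(0, 1)` bound the `p`-th moment of the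
right-hand side uniformly in `h ≤ h*`. For `k = 0` the moment is that of the initial law. -/

lemma norm_le_of_sub_smul_eq {E : Type*} [NormedAddCommGroup E] [InnerProductSpace ℝ E]
    {x b z : E} {h α β : ℝ} (hh : 0 ≤ h) (hhβ : h * β ≤ 1 / 2)
    (hb : ⟪x, b⟫ ≤ α + β * ‖x‖ ^ 2) (hz : x - h • b = z) :
    ‖x‖ ≤ 2 * ‖z‖ + √(2 * h * α) := by
  have hsq : ‖x‖ ^ 2 ≤ 2 * ‖x‖ * ‖z‖ + 2 * h * α := by
    have hxz : ‖x‖ ^ 2 - h * ⟪x, b⟫ = ⟪x, z⟫ := by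
      rw [← hz, inner_sub_right, real_inner_smul_right, real_inner_self_eq_norm_sq]
    have := real_inner_le_norm x z
    nlinarith [mul_le_mul_of_nonneg_left hb hh, mul_le_mul_of_nonneg_right hhβ (sq_nonneg ‖x‖)]
  have hroot : 2 * h * α ≤ √(2 * h * α) ^ 2 := by
    rcases le_total 0 (2 * h * α) with hα | hα
    · rw [Real.sq_sqrt hα]
    · exact hα.trans (sq_nonneg _)
  nlinarith [Real.sqrt_nonneg (2 * h * α), norm_nonneg x, norm_nonneg z]

lemma norm_le_of_implicit_step {E F : Type*} [NormedAddCommGroup E] [InnerProductSpace ℝ E]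
    [NormedAddCommGroup F] [NormedSpace ℝ F] {x x' b : E} {σ : F →L[ℝ] E} {w : F}
    {h α β m L C : ℝ} (hh : 0 ≤ h) (hhβ : h * β ≤ 1 / 2) (hL : 0 ≤ L)
    (hb : ⟪x', b⟫ ≤ α + β * ‖x'‖ ^ 2) (hσ : ‖σ‖ ≤ L * ‖x‖ + C) (hx : ‖x‖ ≤ m)
    (hstep : x' - h • b = x + σ w) :
    ‖x'‖ ≤ 2 * m + √(2 * h * α) + 2 * (L * m + C) * ‖w‖ := by
  have hσm : ‖σ‖ ≤ L * m + C := hσ.trans (by gcongr)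
  have hz : ‖x + σ w‖ ≤ m + (L * m + C) * ‖w‖ :=
    (norm_add_le _ _).trans (add_le_add hx ((σ.le_opNorm w).trans (by gcongr)))
  linarith [norm_le_of_sub_smul_eq hh hhβ hb hstep]

lemma mul_lt_half_of_lt_one_div_max {a b β : ℝ} (hβ : 0 < β) (ha : a < 1 / max b (2 * β)) :
    a * β < 1 / 2 := by
  have h2β : 1 / max b (2 * β) ≤ 1 / (2 * β) :=
    one_div_le_one_div_of_le (by positivity) (le_max_right _ _)
  have := ha.trans_le h2β
  rw [lt_div_iff₀ (by positivity)] at this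
  linarith

lemma natCast_mul_div_mem_Icc {T : ℝ} (hT : 0 ≤ T) {k M : ℕ} (hk : k ≤ M) :
    (k : ℝ) * (T / M) ∈ Set.Icc 0 T := by
  refine ⟨by positivity, ?_⟩
  rcases Nat.eq_zero_or_pos M with rfl | hM
  · simpa using hT
  · calc (k : ℝ) * (T / M) ≤ M * (T / M) := by gcongr
      _ = T := mul_div_cancel₀ _ (by positivity)

lemma EuclideanSpace.norm_le_sum_norm_apply {ι : Type*} [Fintype ι] (x : EuclideanSpace ℝ ι) :
    ‖x‖ ≤ ∑ a, ‖x a‖ := by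
  conv_lhs => rw [← (EuclideanSpace.basisFun ι ℝ).sum_repr x]
  refine (norm_sum_le _ _).trans_eq ?_
  simp [norm_smul]

lemma eLpNorm_id_gaussianReal (v : ℝ≥0) (p : ℝ≥0∞) :
    eLpNorm id p (gaussianReal 0 v) = ENNReal.ofReal √v * eLpNorm id p (gaussianReal 0 1) := by
  have hmap : (gaussianReal 0 1).map (√(v : ℝ) * ·) = gaussianReal 0 v := by
    rw [gaussianReal_map_const_mul, mul_zero]
    congr
    ext
    simp
  rw [← hmap, eLpNorm_map_measure (by fun_prop) (by fun_prop)]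
  exact (eLpNorm_const_smul (√(v : ℝ)) id p _).trans
    (by simp [Real.enorm_eq_ofReal_abs, abs_of_nonneg (Real.sqrt_nonneg _)])

lemma eLpNorm_le_of_map_apply_eq_gaussianReal {Ω ι : Type*} [Fintype ι] {mΩ : MeasurableSpace Ω}
    {P : Measure Ω} {w : Ω → EuclideanSpace ℝ ι} (hw : Measurable w) {v : ℝ≥0}
    (hmap : ∀ a, P.map (fun ω => w ω a) = gaussianReal 0 v) {p : ℝ≥0∞} (hp : 1 ≤ p) :
    eLpNorm w p P
      ≤ Fintype.card ι * (ENNReal.ofReal √v * eLpNorm id p (gaussianReal 0 1)) := by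
  have hcoord : ∀ a, Measurable fun ω => w ω a := fun a =>
    ((measurable_pi_apply a).comp (WithLp.measurable_ofLp _ _)).comp hw
  calc eLpNorm w p P ≤ eLpNorm (∑ a, fun ω => ‖w ω a‖) p P :=
        eLpNorm_mono_real fun ω => by
          simpa using EuclideanSpace.norm_le_sum_norm_apply (w ω)
    _ ≤ ∑ a, eLpNorm (fun ω => ‖w ω a‖) p P :=
        eLpNorm_sum_le (fun a _ => (hcoord a).norm.aestronglyMeasurable) hp
    _ = ∑ a, eLpNorm id p (gaussianReal 0 v) := by
        refine Finset.sum_congr rfl fun a _ => ?_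
        rw [eLpNorm_norm, ← hmap a, eLpNorm_map_measure (by fun_prop) (hcoord a).aemeasurable]
        rfl
    _ = _ := by rw [eLpNorm_id_gaussianReal, Finset.sum_const, Finset.card_univ, nsmul_eq_mul]

lemma eLpNorm_const_add_mul_norm_le {Ω F : Type*} [NormedAddCommGroup F]
    {mΩ : MeasurableSpace Ω} {P : Measure Ω} [IsProbabilityMeasure P] {w : Ω → F}
    (hw : AEStronglyMeasurable w P) {A K : ℝ} (hA : 0 ≤ A) (hK : 0 ≤ K) {p : ℝ≥0∞}
    (hp : 1 ≤ p) :
    eLpNorm (fun ω => A + K * ‖w ω‖) p P ≤ ENNReal.ofReal A + ENNReal.ofReal K * eLpNorm w p P := by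
  have hconst : eLpNorm (fun _ => A) p P = ENNReal.ofReal A := by
    rw [eLpNorm_const _ (one_pos.trans_le hp).ne' (NeZero.ne P), measure_univ, ENNReal.one_rpow,
      mul_one, Real.enorm_eq_ofReal hA]
  have hsmul : eLpNorm (fun ω => K * ‖w ω‖) p P = ENNReal.ofReal K * eLpNorm w p P := by
    rw [← eLpNorm_norm w, ← Real.enorm_eq_ofReal hK, ← eLpNorm_const_smul]
    rfl
  exact (eLpNorm_add_le aestronglyMeasurable_const (hw.norm.const_mul K) hp).trans
    (by rw [hconst, hsmul])

lemma setLIntegral_enorm_rpow_le_of_norm_le {Ω E F : Type*} [NormedAddCommGroup E]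
    [NormedAddCommGroup F] {mΩ : MeasurableSpace Ω} {P : Measure Ω} [IsProbabilityMeasure P]
    {X : Ω → E} {w : Ω → F} (hw : AEStronglyMeasurable w P) {s : Set Ω} {A K p : ℝ}
    (hA : 0 ≤ A) (hK : 0 ≤ K) (hp : 1 ≤ p) (hX : ∀ ω ∈ s, ‖X ω‖ ≤ A + K * ‖w ω‖) :
    ∫⁻ ω in s, ‖X ω‖ₑ ^ p ∂P
      ≤ (ENNReal.ofReal A + ENNReal.ofReal K * eLpNorm w (ENNReal.ofReal p) P) ^ p := by
  set g : Ω → ℝ := fun ω => A + K * ‖w ω‖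
  have hg : AEStronglyMeasurable g P := aestronglyMeasurable_const.add (hw.norm.const_mul K)
  have hp0 : 0 < p := by linarith
  calc ∫⁻ ω in s, ‖X ω‖ₑ ^ p ∂P ≤ ∫⁻ ω in s, ‖g ω‖ₑ ^ p ∂P := by
        refine setLIntegral_mono_ae (hg.enorm.pow_const p).restrict (ae_of_all _ fun ω hω => ?_)
        gcongr
        exact enorm_le_iff_norm_le.mpr ((hX ω hω).trans (Real.le_norm_self _))
    _ ≤ ∫⁻ ω, ‖g ω‖ₑ ^ p ∂P := setLIntegral_le_lintegral _ _
    _ = eLpNorm g (ENNReal.ofReal p) P ^ p := by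
        rw [lintegral_rpow_enorm_eq_rpow_eLpNorm' hp0, eLpNorm_eq_eLpNorm' (by simpa using hp0)
          ENNReal.ofReal_ne_top, ENNReal.toReal_ofReal hp0.le]
    _ ≤ _ := by
        gcongr
        exact eLpNorm_const_add_mul_norm_le hw hA hK (by simpa using hp)

lemma setLIntegral_enorm_rpow_le_of_map_eq {Ω E : Type*} [NormedAddCommGroup E]
    [MeasurableSpace E] [OpensMeasurableSpace E] {mΩ : MeasurableSpace Ω} {P : Measure Ω}
    {X : Ω → E} (hX : Measurable X) {ν : Measure E} (hν : P.map X = ν) (s : Set Ω) (p : ℝ) :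
    ∫⁻ ω in s, ‖X ω‖ₑ ^ p ∂P ≤ ∫⁻ x, ‖x‖ₑ ^ p ∂ν := by
  rw [← hν, lintegral_map (by fun_prop) hX]
  exact setLIntegral_le_lintegral _ _

theorem stmt_15_general (d l : ℕ) (T : ℝ) (hT : 0 < T)
    (L_b L C₀ α₀ β₀ : ℝ) (hL : 0 ≤ L) (hC₀ : 0 ≤ C₀) (hα₀ : 0 ≤ α₀)
    (hβ₀ : 0 < β₀)
    (hstar : ℝ) (hhstar : hstar < 1 / max L_b (2 * β₀))
    (B : (N : ℕ) → ℝ → EuclideanSpace ℝ (Fin d) → (Fin N → EuclideanSpace ℝ (Fin d)) →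
      EuclideanSpace ℝ (Fin d))
    (S : (N : ℕ) → ℝ → EuclideanSpace ℝ (Fin d) → (Fin N → EuclideanSpace ℝ (Fin d)) →
      (EuclideanSpace ℝ (Fin l) →L[ℝ] EuclideanSpace ℝ (Fin d)))
    -- (iv) Lipschitz/Hölder bound for the diffusion coefficient
    (hS : ∀ (N : ℕ), 1 ≤ N → ∀ t ∈ Set.Icc (0 : ℝ) T, ∀ t' ∈ Set.Icc (0 : ℝ) T,
      ∀ (x x' : EuclideanSpace ℝ (Fin d)) (y y' : Fin N → EuclideanSpace ℝ (Fin d)),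
      ‖S N t x y - S N t' x' y'‖
        ≤ L * (‖x - x'‖ + Real.sqrt ((1 / N) * ∑ j, ‖y j - y' j‖ ^ 2))
          + C₀ * Real.sqrt |t - t'|)
    -- (v) uniform bound at the spatial origin
    (h0 : ∀ (N : ℕ), 1 ≤ N → ∀ t ∈ Set.Icc (0 : ℝ) T,
      ∀ y : Fin N → EuclideanSpace ℝ (Fin d), ‖B N t 0 y‖ + ‖S N t 0 y‖ ≤ C₀)
    -- (vi) monotone growth condition
    (hmono : ∀ (N : ℕ), 1 ≤ N → ∀ t ∈ Set.Icc (0 : ℝ) T,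
      ∀ (x : EuclideanSpace ℝ (Fin d)) (y : Fin N → EuclideanSpace ℝ (Fin d)),
      ⟪x, B N t x y⟫
          + (1 / 2) * ∑ a : Fin l, ‖S N t x y (EuclideanSpace.single a (1 : ℝ))‖ ^ 2
        ≤ α₀ + β₀ * ‖x‖ ^ 2)
    -- moment exponent and cut-off level
    (p : ℝ) (hp : 2 ≤ p) (m : ℝ) (hm : 0 < m)
    -- law of the initial condition, with finite p-th moment
    (ν : Measure (EuclideanSpace ℝ (Fin d)))
    (hmom : ∫⁻ x, (‖x‖₊ : ℝ≥0∞) ^ p ∂ν ≠ ⊤) :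
    ∃ C : ℝ, ∀ (M N : ℕ), 1 ≤ M → 1 ≤ N → T / M ≤ hstar →
      ∀ (Ω : Type) (mΩ : MeasurableSpace Ω) (P : Measure Ω), IsProbabilityMeasure P →
      ∀ (ΔW : Fin M → Fin N → Ω → EuclideanSpace ℝ (Fin l))
        (X0 : Fin N → Ω → EuclideanSpace ℝ (Fin d))
        (Xt : ℕ → Fin N → Ω → EuclideanSpace ℝ (Fin d)),
      (∀ k i, Measurable (ΔW k i)) →
      (∀ i, Measurable (X0 i)) →
      -- the coordinates of the Brownian increments form an independent Gaussian family
      iIndepFun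
        (fun pr : Fin M × Fin N × Fin l => fun ω => ΔW pr.1 pr.2.1 ω pr.2.2) P →
      (∀ (k : Fin M) (i : Fin N) (a : Fin l),
        P.map (fun ω => ΔW k i ω a) = gaussianReal 0 (T / M).toNNReal) →
      -- the initial conditions are i.i.d. with law ν, independent of the increments
      iIndepFun X0 P →
      (∀ i, P.map (X0 i) = ν) →
      IndepFun (fun ω => fun i => X0 i ω)
        (fun ω => fun pr : Fin M × Fin N × Fin l => ΔW pr.1 pr.2.1 ω pr.2.2) P →
      -- the implicit Euler particle scheme: initial value, adaptedness, implicit equation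
      (∀ i, Xt 0 i = X0 i) →
      (∀ (k : ℕ), k ≤ M → ∀ i : Fin N,
        Measurable[(⨆ j, MeasurableSpace.comap (X0 j) inferInstance)
          ⊔ ⨆ r : Fin M, ⨆ _ : (r : ℕ) < k, ⨆ j, MeasurableSpace.comap (ΔW r j) inferInstance]
          (Xt k i)) →
      (∀ (k : ℕ) (hk : k < M), ∀ (i : Fin N) (ω : Ω),
        Xt (k + 1) i ω
            - (T / M) • B N ((k : ℝ) * (T / M)) (Xt (k + 1) i ω) (fun j => Xt k j ω)
          = Xt k i ω
            + S N ((k : ℝ) * (T / M)) (Xt k i ω) (fun j => Xt k j ω) (ΔW ⟨k, hk⟩ i ω)) →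
      ∀ (k : ℕ), k ≤ M → ∀ i : Fin N,
        ∫⁻ ω in {ω | ∀ r : ℕ, r < k → ‖Xt r i ω‖ ≤ m}, (‖Xt k i ω‖₊ : ℝ≥0∞) ^ p ∂P
          ≤ ENNReal.ofReal C := by
  set G := eLpNorm id (ENNReal.ofReal p) (gaussianReal 0 1)
  set A := 2 * m + √(2 * hstar * α₀)
  set K := 2 * (L * m + C₀)
  set Cstep : ℝ≥0∞ :=
    (ENNReal.ofReal A + ENNReal.ofReal K * (l * (ENNReal.ofReal √hstar * G))) ^ p
  have hG : G ≠ ⊤ := (memLp_id_gaussianReal' _ ENNReal.ofReal_ne_top).eLpNorm_lt_top.ne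
  have hS_norm : ∀ N, 1 ≤ N → ∀ t ∈ Set.Icc 0 T, ∀ x y, ‖S N t x y‖ ≤ L * ‖x‖ + C₀ := by
    intro N hN t ht x y
    have hlip := hS N hN t ht t ht x 0 y y
    simp only [sub_zero, sub_self, norm_zero, ne_eq, OfNat.ofNat_ne_zero, not_false_eq_true,
      zero_pow, Finset.sum_const_zero, mul_zero, Real.sqrt_zero, add_zero, abs_zero] at hlip
    linarith [norm_sub_norm_le (S N t x y) (S N t 0 y), h0 N hN t ht y, norm_nonneg (B N t 0 y)]
  have hB_inner : ∀ N, 1 ≤ N → ∀ t ∈ Set.Icc 0 T, ∀ x y, ⟪x, B N t x y⟫ ≤ α₀ + β₀ * ‖x‖ ^ 2 :=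
    fun N hN t ht x y => by
      linarith [hmono N hN t ht x y, Finset.sum_nonneg fun a (_ : a ∈ Finset.univ) =>
        sq_nonneg ‖S N t x y (EuclideanSpace.single a (1 : ℝ))‖]
  refine ⟨max (∫⁻ x, (‖x‖₊ : ℝ≥0∞) ^ p ∂ν).toReal Cstep.toReal, ?_⟩
  intro M N _ hN hh Ω _ P _ ΔW X0 Xt hΔW hX0 _ hgauss _ hlaw _ hXt0 _ himpl k hk i
  rcases k with _ | j
  · calc _ ≤ ∫⁻ x, (‖x‖₊ : ℝ≥0∞) ^ p ∂ν :=
          hXt0 i ▸ setLIntegral_enorm_rpow_le_of_map_eq (hX0 i) (hlaw i) _ p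
      _ = ENNReal.ofReal (∫⁻ x, (‖x‖₊ : ℝ≥0∞) ^ p ∂ν).toReal := (ENNReal.ofReal_toReal hmom).symm
      _ ≤ _ := ENNReal.ofReal_le_ofReal (le_max_left _ _)
  have hj : j < M := hk
  have hh0 : 0 ≤ T / M := by positivity
  have hhβ : T / M * β₀ ≤ 1 / 2 :=
    (mul_le_mul_of_nonneg_right hh hβ₀.le).trans (mul_lt_half_of_lt_one_div_max hβ₀ hhstar).le
  have ht := natCast_mul_div_mem_Icc hT.le hj.le
  have hstep : ∀ ω ∈ {ω | ∀ r < j + 1, ‖Xt r i ω‖ ≤ m},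
      ‖Xt (j + 1) i ω‖ ≤ A + K * ‖ΔW ⟨j, hj⟩ i ω‖ := fun ω hω =>
    (norm_le_of_implicit_step hh0 hhβ hL (hB_inner N hN _ ht _ _) (hS_norm N hN _ ht _ _)
      (hω j j.lt_succ_self) (himpl j hj i ω)).trans (by dsimp only [A, K]; gcongr)
  calc _ ≤ (ENNReal.ofReal A
        + ENNReal.ofReal K * eLpNorm (ΔW ⟨j, hj⟩ i) (ENNReal.ofReal p) P) ^ p :=
        setLIntegral_enorm_rpow_le_of_norm_le (hΔW _ _).aestronglyMeasurable (by positivity)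
          (by positivity) (by linarith) hstep
    _ ≤ Cstep := by
        refine ENNReal.rpow_le_rpow ?_ (by linarith)
        gcongr
        refine (eLpNorm_le_of_map_apply_eq_gaussianReal (hΔW _ _) (hgauss _ i) ?_).trans ?_
        · simpa using hp.trans' one_le_two
        · simp only [Fintype.card_fin]
          gcongr
          rw [Real.coe_toNNReal _ hh0]
          exact hh
    _ = ENNReal.ofReal Cstep.toReal := (ENNReal.ofReal_toReal (by finiteness)).symm
    _ ≤ _ := ENNReal.ofReal_le_ofReal (le_max_right _ _)

/-- Stopped `p`-th moment bound for the implicit (backward) Euler particle scheme: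
`E[‖X̃_k^i‖^p · 1_{k ≤ λ_m^i}] ≤ C(p,m)`, where `λ_m^i = inf {k : ‖X̃_k^i‖ > m}`, so that
`k ≤ λ_m^i` is the event `∀ r < k, ‖X̃_r^i‖ ≤ m`.  The constant depends only on the data fixed
before the existential quantifier, not on `M`, `N`, `i`, `k` or the step size `h = T/M ≤ h*`. -/
theorem stmt_15 (d l : ℕ) (hd : 1 ≤ d) (hl : 1 ≤ l) (T : ℝ) (hT : 0 < T)
    (L_b L C₀ α₀ β₀ : ℝ) (hLb : 0 < L_b) (hL : 0 ≤ L) (hC₀ : 0 ≤ C₀) (hα₀ : 0 ≤ α₀)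
    (hβ₀ : 0 < β₀) (q : ℕ) (hq : 1 < q)
    (hstar : ℝ) (hhstar : hstar < 1 / max L_b (2 * β₀))
    (B : (N : ℕ) → ℝ → EuclideanSpace ℝ (Fin d) → (Fin N → EuclideanSpace ℝ (Fin d)) →
      EuclideanSpace ℝ (Fin d))
    (S : (N : ℕ) → ℝ → EuclideanSpace ℝ (Fin d) → (Fin N → EuclideanSpace ℝ (Fin d)) →
      (EuclideanSpace ℝ (Fin l) →L[ℝ] EuclideanSpace ℝ (Fin d)))
    -- (i) one-sided Lipschitz in space
    (hB1 : ∀ (N : ℕ), 1 ≤ N → ∀ t ∈ Set.Icc (0 : ℝ) T,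
      ∀ (x x' : EuclideanSpace ℝ (Fin d)) (y : Fin N → EuclideanSpace ℝ (Fin d)),
      ⟪x - x', B N t x y - B N t x' y⟫ ≤ L_b * ‖x - x'‖ ^ 2)
    -- (ii) locally Lipschitz with polynomial growth in space
    (hB2 : ∀ (N : ℕ), 1 ≤ N → ∀ t ∈ Set.Icc (0 : ℝ) T,
      ∀ (x x' : EuclideanSpace ℝ (Fin d)) (y : Fin N → EuclideanSpace ℝ (Fin d)),
      ‖B N t x y - B N t x' y‖ ≤ L * (1 + ‖x‖ ^ q + ‖x'‖ ^ q) * ‖x - x'‖)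
    -- (iii) 1/2-Hölder in time
    (hB3 : ∀ (N : ℕ), 1 ≤ N → ∀ t ∈ Set.Icc (0 : ℝ) T, ∀ t' ∈ Set.Icc (0 : ℝ) T,
      ∀ (x : EuclideanSpace ℝ (Fin d)) (y : Fin N → EuclideanSpace ℝ (Fin d)),
      ‖B N t x y - B N t' x y‖ ≤ C₀ * Real.sqrt |t - t'|)
    -- (iv) Lipschitz/Hölder bound for the diffusion coefficient
    (hS : ∀ (N : ℕ), 1 ≤ N → ∀ t ∈ Set.Icc (0 : ℝ) T, ∀ t' ∈ Set.Icc (0 : ℝ) T,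
      ∀ (x x' : EuclideanSpace ℝ (Fin d)) (y y' : Fin N → EuclideanSpace ℝ (Fin d)),
      ‖S N t x y - S N t' x' y'‖
        ≤ L * (‖x - x'‖ + Real.sqrt ((1 / N) * ∑ j, ‖y j - y' j‖ ^ 2))
          + C₀ * Real.sqrt |t - t'|)
    -- (v) uniform bound at the spatial origin
    (h0 : ∀ (N : ℕ), 1 ≤ N → ∀ t ∈ Set.Icc (0 : ℝ) T,
      ∀ y : Fin N → EuclideanSpace ℝ (Fin d), ‖B N t 0 y‖ + ‖S N t 0 y‖ ≤ C₀)
    -- (vi) monotone growth condition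
    (hmono : ∀ (N : ℕ), 1 ≤ N → ∀ t ∈ Set.Icc (0 : ℝ) T,
      ∀ (x : EuclideanSpace ℝ (Fin d)) (y : Fin N → EuclideanSpace ℝ (Fin d)),
      ⟪x, B N t x y⟫
          + (1 / 2) * ∑ a : Fin l, ‖S N t x y (EuclideanSpace.single a (1 : ℝ))‖ ^ 2
        ≤ α₀ + β₀ * ‖x‖ ^ 2)
    -- moment exponent and cut-off level
    (p : ℝ) (hp : 2 ≤ p) (m : ℝ) (hm : 0 < m)
    -- law of the initial condition, with finite p-th moment
    (ν : Measure (EuclideanSpace ℝ (Fin d))) (hν : IsProbabilityMeasure ν)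
    (hmom : ∫⁻ x, (‖x‖₊ : ℝ≥0∞) ^ p ∂ν ≠ ⊤) :
    ∃ C : ℝ, ∀ (M N : ℕ), 1 ≤ M → 1 ≤ N → T / M ≤ hstar →
      ∀ (Ω : Type) (mΩ : MeasurableSpace Ω) (P : Measure Ω), IsProbabilityMeasure P →
      ∀ (ΔW : Fin M → Fin N → Ω → EuclideanSpace ℝ (Fin l))
        (X0 : Fin N → Ω → EuclideanSpace ℝ (Fin d))
        (Xt : ℕ → Fin N → Ω → EuclideanSpace ℝ (Fin d)),
      (∀ k i, Measurable (ΔW k i)) →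
      (∀ i, Measurable (X0 i)) →
      -- the coordinates of the Brownian increments form an independent Gaussian family
      iIndepFun
        (fun pr : Fin M × Fin N × Fin l => fun ω => ΔW pr.1 pr.2.1 ω pr.2.2) P →
      (∀ (k : Fin M) (i : Fin N) (a : Fin l),
        P.map (fun ω => ΔW k i ω a) = gaussianReal 0 (T / M).toNNReal) →
      -- the initial conditions are i.i.d. with law ν, independent of the increments
      iIndepFun X0 P →
      (∀ i, P.map (X0 i) = ν) →
      IndepFun (fun ω => fun i => X0 i ω)
        (fun ω => fun pr : Fin M × Fin N × Fin l => ΔW pr.1 pr.2.1 ω pr.2.2) P →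
      -- the implicit Euler particle scheme: initial value, adaptedness, implicit equation
      (∀ i, Xt 0 i = X0 i) →
      (∀ (k : ℕ), k ≤ M → ∀ i : Fin N,
        Measurable[(⨆ j, MeasurableSpace.comap (X0 j) inferInstance)
          ⊔ ⨆ r : Fin M, ⨆ _ : (r : ℕ) < k, ⨆ j, MeasurableSpace.comap (ΔW r j) inferInstance]
          (Xt k i)) →
      (∀ (k : ℕ) (hk : k < M), ∀ (i : Fin N) (ω : Ω),
        Xt (k + 1) i ω
            - (T / M) • B N ((k : ℝ) * (T / M)) (Xt (k + 1) i ω) (fun j => Xt k j ω)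
          = Xt k i ω
            + S N ((k : ℝ) * (T / M)) (Xt k i ω) (fun j => Xt k j ω) (ΔW ⟨k, hk⟩ i ω)) →
      ∀ (k : ℕ), k ≤ M → ∀ i : Fin N,
        ∫⁻ ω in {ω | ∀ r : ℕ, r < k → ‖Xt r i ω‖ ≤ m}, (‖Xt k i ω‖₊ : ℝ≥0∞) ^ p ∂P
          ≤ ENNReal.ofReal C :=
  stmt_15_general d l T hT L_b L C₀ α₀ β₀ hL hC₀ hα₀ hβ₀ hstar hhstar B S hS h0 hmono p hp m hm ν
    hmom
end
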